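/- arXiv:2204.03787 — 2 statements merged into one kernel-verified Lean document; each statement's English description precedes it below -/
import Mathlib

section
/- Let G be a connected graph of order n with maximum reciprocal transmission RTr₁, let RQ(G) = RT(G) + RD(G) be the reciprocal distance signless Laplacian, and let ρ denote spectral radius. (i) For 0 ≤ α ≤ ½: (1−α)ρ(RQ(G)) + (2α−1)RTr₁ ≤ ρ(RD_α(G)) ≤ α·ρ(RQ(G)) + (1−2α)ρ(RD(G)). (ii) For ½ ≤ α ≤ 1: α·ρ(RQ(G)) + (1−2α)ρ(RD(G)) ≤ ρ(RD_α(G)) ≤ (1−α)ρ(RQ(G)) + (2α−1)RTr₁. -/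
open Matrix BigOperators Finset

/-- The reciprocal distance (Harary) matrix of a graph. -/
noncomputable def RDmat {V : Type*} [Fintype V] [DecidableEq V] (G : SimpleGraph V) :
    Matrix V V ℝ :=
  Matrix.of fun i j => if i = j then 0 else (1 : ℝ) / (G.dist i j)

/-- The reciprocal transmission of a vertex. -/
noncomputable def RTr {V : Type*} [Fintype V] [DecidableEq V] (G : SimpleGraph V) (v : V) : ℝ :=
  ∑ u ∈ Finset.univ.erase v, (1 : ℝ) / (G.dist u v)

/-- The generalized reciprocal distance matrix `RD_α(G) = α RT(G) + (1-α) RD(G)`. -/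
noncomputable def RDalpha {V : Type*} [Fintype V] [DecidableEq V] (G : SimpleGraph V) (α : ℝ) :
    Matrix V V ℝ :=
  α • Matrix.diagonal (RTr G) + (1 - α) • RDmat G

/-- The `i`-th largest eigenvalue (1-indexed, with multiplicity) of a real matrix,
obtained from the roots of its characteristic polynomial sorted decreasingly. -/
noncomputable def eigDesc {V : Type*} [Fintype V] [DecidableEq V] (M : Matrix V V ℝ) (i : ℕ) : ℝ :=
  ((M.charpoly.roots.sort (· ≤ ·)).reverse).getD (i - 1) 0

/-- The spectral radius (largest eigenvalue) of a real symmetric matrix. -/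
noncomputable def specRadius {V : Type*} [Fintype V] [DecidableEq V] (M : Matrix V V ℝ) : ℝ :=
  eigDesc M 1

/-- The join of two graphs. -/
def gjoin {V₁ V₂ : Type*} (G₁ : SimpleGraph V₁) (G₂ : SimpleGraph V₂) :
    SimpleGraph (V₁ ⊕ V₂) where
  Adj x y := match x, y with
    | Sum.inl a, Sum.inl b => G₁.Adj a b
    | Sum.inr a, Sum.inr b => G₂.Adj a b
    | Sum.inl _, Sum.inr _ => True
    | Sum.inr _, Sum.inl _ => True
  symm := ⟨by rintro (a|a) (b|b) h <;> first | exact G₁.adj_symm h | exact G₂.adj_symm h | trivial⟩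
  loopless := ⟨by rintro (a|a) h <;> first | exact G₁.irrefl h | exact G₂.irrefl h⟩

/-
Since `RD_α(G) = α RQ(G) + (1 - 2α) RD(G) = (1 - α) RQ(G) + (2α - 1) RT(G)`, all four bounds
come from two Rayleigh-quotient inequalities for symmetric matrices `A`, `B`:
`ρ(aA + bB) ≤ a ρ(A) + b ρ(B)` when `a, b ≥ 0` (test with a top eigenvector of `aA + bB`),
and `a ρ(A) + b ρ(B) ≤ ρ(aA + bB)` when `b ≤ 0` (test with a top eigenvector of `A`),
together with `ρ(RT(G)) = RTr₁`.
-/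

theorem Finset.reverse_sort_map_getD_zero {ι α : Type*} [LinearOrder α] (s : Finset ι)
    (hs : s.Nonempty) (f : ι → α) (d : α) :
    ((s.val.map f).sort (· ≤ ·)).reverse.getD 0 d = s.sup' hs f := by
  have hne : ((s.val.map f).sort (· ≤ ·)).reverse ≠ [] := by
    simpa [← List.length_pos_iff, Multiset.length_sort] using hs.card_pos
  obtain ⟨a, t, hat⟩ := List.exists_cons_of_ne_nil hne
  have hmem : ∀ x, x ∈ a :: t ↔ x ∈ s.val.map f := by
    intro x; rw [← hat, List.mem_reverse, Multiset.mem_sort]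
  have hanti : ∀ x ∈ t, x ≤ a := by
    have := List.pairwise_reverse.2 (Multiset.pairwise_sort (s.val.map f) (· ≤ ·))
    rw [hat, List.pairwise_cons] at this
    exact this.1
  rw [hat, List.getD_cons_zero]
  apply le_antisymm
  · obtain ⟨i, hi, rfl⟩ := Multiset.mem_map.1 ((hmem a).1 List.mem_cons_self)
    exact le_sup' f hi
  · refine sup'_le _ _ fun i hi => ?_
    rcases List.mem_cons.1 ((hmem (f i)).2 (Multiset.mem_map_of_mem f hi)) with h | h
    · exact h.le
    · exact hanti _ h

theorem Matrix.IsHermitian.smul_add_smul {n : Type*} {A B : Matrix n n ℝ} (hA : A.IsHermitian)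
    (hB : B.IsHermitian) (a b : ℝ) : (a • A + b • B).IsHermitian :=
  (hA.smul (IsSelfAdjoint.all a)).add (hB.smul (IsSelfAdjoint.all b))

namespace Matrix

variable {n : Type*} [Fintype n] {R : Type*} [CommSemiring R]

theorem dotProduct_smul_add_smul_mulVec (a b : R) (A B : Matrix n n R) (v : n → R) :
    v ⬝ᵥ ((a • A + b • B) *ᵥ v) =
      a * (v ⬝ᵥ (A *ᵥ v)) + b * (v ⬝ᵥ (B *ᵥ v)) := by
  rw [add_mulVec, smul_mulVec, smul_mulVec, dotProduct_add, dotProduct_smul, dotProduct_smul,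
    smul_eq_mul, smul_eq_mul]

theorem dotProduct_mulVec_mul_mul_transpose (U D : Matrix n n R) (x : n → R) :
    x ⬝ᵥ ((U * D * Uᵀ) *ᵥ x) = (Uᵀ *ᵥ x) ⬝ᵥ (D *ᵥ (Uᵀ *ᵥ x)) := by
  rw [← mulVec_mulVec, ← mulVec_mulVec, dotProduct_mulVec x U, ← mulVec_transpose]

variable [DecidableEq n]

theorem transpose_mulVec_dotProduct_self {U : Matrix n n R} (hU : U * Uᵀ = 1) (x : n → R) :
    (Uᵀ *ᵥ x) ⬝ᵥ (Uᵀ *ᵥ x) = x ⬝ᵥ x := by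
  rw [dotProduct_mulVec, vecMul_transpose, mulVec_mulVec, hU, one_mulVec]

theorem specRadius_eq_sup'_of_roots_charpoly [Nonempty n] {A : Matrix n n ℝ} {f : n → ℝ}
    (h : A.charpoly.roots = univ.val.map f) : specRadius A = univ.sup' univ_nonempty f := by
  rw [specRadius, eigDesc, h]
  exact univ.reverse_sort_map_getD_zero univ_nonempty f 0

theorem specRadius_diagonal [Nonempty n] (d : n → ℝ) :
    specRadius (diagonal d) = univ.sup' univ_nonempty d :=
  specRadius_eq_sup'_of_roots_charpoly <| by
    rw [charpoly_diagonal]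
    simpa using Polynomial.roots_multiset_prod_X_sub_C (univ.val.map d)

theorem dotProduct_diagonal_mulVec_le {d : n → ℝ} {c : ℝ} (hd : ∀ i, d i ≤ c)
    (y : n → ℝ) :
    y ⬝ᵥ (diagonal d *ᵥ y) ≤ c * (y ⬝ᵥ y) := by
  simp only [dotProduct, mulVec_diagonal, mul_sum]
  refine sum_le_sum fun i _ => ?_
  calc y i * (d i * y i) = d i * (y i * y i) := by ring
    _ ≤ c * (y i * y i) := mul_le_mul_of_nonneg_right (hd i) (mul_self_nonneg _)

namespace IsHermitian

variable [Nonempty n] {A B : Matrix n n ℝ}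

theorem specRadius_eq_sup'_eigenvalues (hA : A.IsHermitian) :
    specRadius A = univ.sup' univ_nonempty hA.eigenvalues :=
  specRadius_eq_sup'_of_roots_charpoly hA.roots_charpoly_eq_eigenvalues

theorem dotProduct_mulVec_le_specRadius_mul (hA : A.IsHermitian) (x : n → ℝ) :
    x ⬝ᵥ (A *ᵥ x) ≤ specRadius A * (x ⬝ᵥ x) := by
  set U : Matrix n n ℝ := ↑hA.eigenvectorUnitary
  have hstar : star U = Uᵀ := U.conjTranspose_eq_transpose_of_trivial
  have hUUt : U * Uᵀ = 1 := hstar ▸ Unitary.mul_star_self_of_mem hA.eigenvectorUnitary.2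
  have hspec : A = U * diagonal hA.eigenvalues * Uᵀ := by
    conv_lhs => rw [hA.spectral_theorem, Unitary.conjStarAlgAut_apply]
    exact congrArg (U * diagonal hA.eigenvalues * ·) hstar
  have hle : ∀ i, hA.eigenvalues i ≤ specRadius A := fun i =>
    hA.specRadius_eq_sup'_eigenvalues ▸ le_sup' _ (mem_univ i)
  calc x ⬝ᵥ (A *ᵥ x) = (Uᵀ *ᵥ x) ⬝ᵥ (diagonal hA.eigenvalues *ᵥ (Uᵀ *ᵥ x)) := by
        rw [← dotProduct_mulVec_mul_mul_transpose, ← hspec]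
    _ ≤ specRadius A * ((Uᵀ *ᵥ x) ⬝ᵥ (Uᵀ *ᵥ x)) := dotProduct_diagonal_mulVec_le hle _
    _ = specRadius A * (x ⬝ᵥ x) := by rw [transpose_mulVec_dotProduct_self hUUt]

theorem exists_dotProduct_mulVec_eq_specRadius (hA : A.IsHermitian) :
    ∃ v : n → ℝ, v ⬝ᵥ v = 1 ∧ v ⬝ᵥ (A *ᵥ v) = specRadius A := by
  obtain ⟨j, -, hj⟩ := exists_mem_eq_sup' univ_nonempty hA.eigenvalues
  have hunit : ⇑(hA.eigenvectorBasis j) ⬝ᵥ ⇑(hA.eigenvectorBasis j) = 1 := by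
    have h := real_inner_self_eq_norm_sq (hA.eigenvectorBasis j)
    rw [hA.eigenvectorBasis.orthonormal.1 j, EuclideanSpace.inner_eq_star_dotProduct] at h
    simpa using h
  refine ⟨_, hunit, ?_⟩
  rw [hA.mulVec_eigenvectorBasis, dotProduct_smul, hunit, smul_eq_mul, mul_one,
    hA.specRadius_eq_sup'_eigenvalues, hj]

theorem specRadius_smul_add_smul_le (hA : A.IsHermitian) (hB : B.IsHermitian) {a b : ℝ}
    (ha : 0 ≤ a) (hb : 0 ≤ b) :
    specRadius (a • A + b • B) ≤ a * specRadius A + b * specRadius B := by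
  obtain ⟨v, hv, hvρ⟩ := (hA.smul_add_smul hB a b).exists_dotProduct_mulVec_eq_specRadius
  have hAv := hA.dotProduct_mulVec_le_specRadius_mul v
  have hBv := hB.dotProduct_mulVec_le_specRadius_mul v
  rw [hv, mul_one] at hAv hBv
  rw [← hvρ, dotProduct_smul_add_smul_mulVec]
  gcongr

theorem le_specRadius_smul_add_smul (hA : A.IsHermitian) (hB : B.IsHermitian) {a b : ℝ}
    (hb : b ≤ 0) :
    a * specRadius A + b * specRadius B ≤ specRadius (a • A + b • B) := by
  obtain ⟨v, hv, hvρ⟩ := hA.exists_dotProduct_mulVec_eq_specRadius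
  have hBv := hB.dotProduct_mulVec_le_specRadius_mul v
  have hABv := (hA.smul_add_smul hB a b).dotProduct_mulVec_le_specRadius_mul v
  rw [hv, mul_one] at hBv hABv
  rw [dotProduct_smul_add_smul_mulVec, hvρ] at hABv
  linarith [mul_le_mul_of_nonpos_left hBv hb]

end IsHermitian

end Matrix

theorem isHermitian_RDmat {V : Type*} [Fintype V] [DecidableEq V] (G : SimpleGraph V) :
    (RDmat G).IsHermitian := by
  ext i j
  simp only [conjTranspose_apply, star_trivial, RDmat, of_apply, G.dist_comm, eq_comm]

theorem RDalpha_eq_smul_RQ_add_smul_RDmat {V : Type*} [Fintype V] [DecidableEq V]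
    (G : SimpleGraph V) (α : ℝ) :
    RDalpha G α = α • (diagonal (RTr G) + RDmat G) + (1 - 2 * α) • RDmat G := by
  rw [RDalpha]; module

theorem RDalpha_eq_smul_RQ_add_smul_diagonal {V : Type*} [Fintype V] [DecidableEq V]
    (G : SimpleGraph V) (α : ℝ) :
    RDalpha G α =
      (1 - α) • (diagonal (RTr G) + RDmat G) + (2 * α - 1) • diagonal (RTr G) := by
  rw [RDalpha]; module

/-- Proposition 3.8: bounds for `ρ(RD_α(G))` in terms of `ρ(RQ(G))`, `ρ(RD(G))` and the
maximum reciprocal transmission `RTr₁`. -/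
theorem stmt11 {V : Type*} [Fintype V] [DecidableEq V] (G : SimpleGraph V) (hG : G.Connected)
    (α : ℝ) :
    (0 ≤ α → α ≤ 1 / 2 →
      (1 - α) * specRadius (Matrix.diagonal (RTr G) + RDmat G)
          + (2 * α - 1) * Finset.univ.sup' (Finset.univ_nonempty_iff.mpr hG.nonempty) (RTr G)
        ≤ specRadius (RDalpha G α) ∧
      specRadius (RDalpha G α)
        ≤ α * specRadius (Matrix.diagonal (RTr G) + RDmat G)
          + (1 - 2 * α) * specRadius (RDmat G)) ∧
    (1 / 2 ≤ α → α ≤ 1 →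
      α * specRadius (Matrix.diagonal (RTr G) + RDmat G)
          + (1 - 2 * α) * specRadius (RDmat G)
        ≤ specRadius (RDalpha G α) ∧
      specRadius (RDalpha G α)
        ≤ (1 - α) * specRadius (Matrix.diagonal (RTr G) + RDmat G)
          + (2 * α - 1) * Finset.univ.sup' (Finset.univ_nonempty_iff.mpr hG.nonempty) (RTr G)) := by
  have : Nonempty V := hG.nonempty
  have hD := isHermitian_RDmat G
  have hT : (diagonal (RTr G)).IsHermitian := isHermitian_diagonal _
  have hQ := hT.add hD
  have hρT := specRadius_diagonal (RTr G)
  refine ⟨fun h0 h12 => ⟨?_, ?_⟩, fun h12 h1 => ⟨?_, ?_⟩⟩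
  · rw [RDalpha_eq_smul_RQ_add_smul_diagonal, ← hρT]
    exact hQ.le_specRadius_smul_add_smul hT (by linarith)
  · rw [RDalpha_eq_smul_RQ_add_smul_RDmat]
    exact hQ.specRadius_smul_add_smul_le hD h0 (by linarith)
  · rw [RDalpha_eq_smul_RQ_add_smul_RDmat]
    exact hQ.le_specRadius_smul_add_smul hD (by linarith)
  · rw [RDalpha_eq_smul_RQ_add_smul_diagonal, ← hρT]
    exact hQ.specRadius_smul_add_smul_le hT (by linarith) (by linarith)
end

section
/- Let G be a connected graph on n vertices and α ∈ [0,1]. Then ρ(RD_α(G)) ≤ max over i ∈ {1,…,n} of [ α·RTr_G(v_i) + (1−α)·√( (n−1) · Σ_{k≠i} (1/d_G(v_k,v_i))² ) ]. -/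
open Matrix BigOperators Finset

/-!
Every real eigenvalue of a matrix lies in a Gershgorin disc, so it is at most
`M k k + ∑ j ≠ k, |M k j|` for some row `k`. For `RD_α(G)` with `α ≤ 1` this row bound is exactly
`α RTr(k) + (1 - α) RTr(k)`, and Cauchy–Schwarz over the `n - 1` off-diagonal entries gives
`RTr(k) ≤ √((n - 1) ∑ (1/d)²)`. The spectral radius, read off the sorted roots of the
characteristic polynomial, is either such an eigenvalue or the junk value `0`, and the bound is
nonnegative.
-/

theorem Finset.sum_le_sqrt_card_mul_sum_sq {ι : Type*} (s : Finset ι) (f : ι → ℝ) :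
    ∑ i ∈ s, f i ≤ Real.sqrt (#s * ∑ i ∈ s, f i ^ 2) :=
  Real.le_sqrt_of_sq_le sq_sum_le_card_mul_sum_sq

theorem Matrix.exists_le_diag_add_sum_abs_of_isRoot_charpoly {n : Type*} [Fintype n]
    [DecidableEq n] {A : Matrix n n ℝ} {μ : ℝ} (hμ : A.charpoly.IsRoot μ) :
    ∃ k, μ ≤ A k k + ∑ j ∈ univ.erase k, |A k j| := by
  have hEig : Module.End.HasEigenvalue (Matrix.toLin' A) μ := by
    rwa [Module.End.hasEigenvalue_iff_isRoot_charpoly, Matrix.charpoly_toLin']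
  obtain ⟨k, hk⟩ := eigenvalue_mem_ball hEig
  rw [Metric.mem_closedBall, Real.dist_eq] at hk
  simp only [Real.norm_eq_abs] at hk
  exact ⟨k, by linarith [le_abs_self (μ - A k k)]⟩

section Spectrum

variable {V : Type*} [Fintype V] [DecidableEq V]

theorem eigDesc_eq_zero_or_isRoot (M : Matrix V V ℝ) (i : ℕ) :
    eigDesc M i = 0 ∨ M.charpoly.IsRoot (eigDesc M i) := by
  unfold eigDesc
  rw [List.getD_eq_getElem?_getD]
  rcases h : ((M.charpoly.roots.sort (· ≤ ·)).reverse)[i - 1]? with _ | a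
  · exact Or.inl rfl
  · have ha := List.mem_of_getElem? h
    rw [List.mem_reverse, Multiset.mem_sort] at ha
    exact Or.inr (Polynomial.isRoot_of_mem_roots ha)

theorem specRadius_le_of_forall_row_le {M : Matrix V V ℝ} {B : ℝ} (hB : 0 ≤ B)
    (hrow : ∀ k, M k k + ∑ j ∈ univ.erase k, |M k j| ≤ B) : specRadius M ≤ B := by
  rcases eigDesc_eq_zero_or_isRoot M 1 with hzero | hroot
  · exact hzero.trans_le hB
  · obtain ⟨k, hk⟩ := exists_le_diag_add_sum_abs_of_isRoot_charpoly hroot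
    exact hk.trans (hrow k)

end Spectrum

section ReciprocalDistance

variable {V : Type*} [Fintype V] [DecidableEq V] (G : SimpleGraph V)

theorem RTr_nonneg (v : V) : 0 ≤ RTr G v :=
  sum_nonneg fun _ _ => by positivity

theorem RTr_le_sqrt (v : V) :
    RTr G v ≤ Real.sqrt (((Fintype.card V : ℝ) - 1) *
      ∑ u ∈ univ.erase v, ((1 : ℝ) / (G.dist u v)) ^ 2) := by
  have hcard : (#(univ.erase v) : ℝ) = (Fintype.card V : ℝ) - 1 := by
    rw [card_erase_of_mem (mem_univ v), card_univ,
      Nat.cast_sub (Fintype.card_pos_iff.mpr ⟨v⟩), Nat.cast_one]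
  rw [← hcard]
  exact sum_le_sqrt_card_mul_sum_sq _ _

theorem RDalpha_apply_self (α : ℝ) (k : V) : RDalpha G α k k = α * RTr G k := by
  simp [RDalpha, RDmat]

theorem RDalpha_apply_of_ne (α : ℝ) {k j : V} (h : k ≠ j) :
    RDalpha G α k j = (1 - α) * (1 / G.dist k j) := by
  simp [RDalpha, RDmat, h]

theorem RDalpha_row_bound_eq_RTr {α : ℝ} (hα : α ≤ 1) (k : V) :
    RDalpha G α k k + ∑ j ∈ univ.erase k, |RDalpha G α k j| = RTr G k := by
  have hoff : ∀ j ∈ univ.erase k, |RDalpha G α k j| = (1 - α) * (1 / G.dist j k) := by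
    intro j hj
    rw [RDalpha_apply_of_ne G α (ne_of_mem_erase hj).symm, G.dist_comm,
      abs_of_nonneg (mul_nonneg (sub_nonneg.mpr hα) (by positivity))]
  rw [sum_congr rfl hoff, ← mul_sum, RDalpha_apply_self]
  unfold RTr
  ring

end ReciprocalDistance

/-- Theorem 3.14: upper bound for `ρ(RD_α(G))`. -/
theorem stmt14 {V : Type*} [Fintype V] [DecidableEq V] (G : SimpleGraph V) (hG : G.Connected)
    (α : ℝ) (hα : α ∈ Set.Icc (0 : ℝ) 1) :
    specRadius (RDalpha G α) ≤
      Finset.univ.sup' (Finset.univ_nonempty_iff.mpr hG.nonempty)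
        (fun i => α * RTr G i + (1 - α) *
          Real.sqrt (((Fintype.card V : ℝ) - 1) *
            ∑ k ∈ Finset.univ.erase i, ((1 : ℝ) / (G.dist k i)) ^ 2)) := by
  obtain ⟨hα0, hα1⟩ := hα
  have h1α : 0 ≤ 1 - α := sub_nonneg.mpr hα1
  obtain ⟨v⟩ := hG.nonempty
  refine specRadius_le_of_forall_row_le ?_ fun k => ?_
  · exact le_sup'_of_le _ (mem_univ v)
      (add_nonneg (mul_nonneg hα0 (RTr_nonneg G v)) (mul_nonneg h1α (Real.sqrt_nonneg _)))
  · rw [RDalpha_row_bound_eq_RTr G hα1]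
    refine le_sup'_of_le _ (mem_univ k) ?_
    calc RTr G k = α * RTr G k + (1 - α) * RTr G k := by ring
      _ ≤ _ := by gcongr; exact RTr_le_sqrt G k
end
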